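/- Let n_T = 2 and suppose the Hermitian 2×2 matrix H_R†H_R − H_E†H_E is positive definite. Then there exists ρ₀ > 0 such that for every ρ > ρ₀, every maximizer Q of the secrecy rate C_s over Ω has rank two (i.e., no rank-one matrix in Ω maximizes C_s). -/

import Mathlib

/-
Suppose a rank-one `Q` maximises `C_s`. A unitary change of basis, which replaces `H_R, H_E` by
`H_R U, H_E U` and leaves `det D`, `tr D`, `tr B` unchanged (`B = H_Eᴴ H_E`, `D = H_Rᴴ H_R - B`),
turns `Q` into `diag(1, 0)`. Compare it with `Q' = diag(1 - 1/ρ, 1/ρ)`: for `K = Hᴴ H`,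
`det(1 + ρ Q K) = 1 + ρ K₀₀` and `det(1 + ρ Q' K) = (1 + (ρ - 1) K₀₀)(1 + K₁₁) - (ρ - 1)|K₀₁|²`.
Cross-multiplied, `C_s(Q') - C_s(Q)` has the sign of `(ρ - 1)(ρ c + det D + 2 B₀₀ D₁₁ - 2m) + O(1)`,
where `m = Re(B₀₁ conj D₀₁)` and `c = B₀₀ det(B + D) - (B + D)₀₀ det B` is a Schur-complement gap.
Positive definiteness of `D` gives `c ≥ (det D / tr D) |B₀₁|²`, which absorbs the only negative
term `-2m ≥ -2 tr D |B₀₁|` as soon as `ρ ≥ 2 (tr D)³ / (det D)²`; hence `Q'` does strictly better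
for every `ρ` above an explicit threshold.
-/

open Matrix
open scoped ComplexOrder

namespace Matrix

lemma det_one_add_smul_mul_mul_comm {R m n : Type*} [CommRing R] [Fintype m] [Fintype n]
    [DecidableEq m] [DecidableEq n] (c : R) (H : Matrix m n R) (S : Matrix n n R)
    (G : Matrix n m R) :
    (1 + c • (H * S * G)).det = (1 + c • (S * (G * H))).det := by
  rw [Matrix.mul_assoc, ← Matrix.mul_smul, det_one_add_mul_comm, Matrix.smul_mul, Matrix.mul_assoc]

lemma conjTranspose_mul_self_mul {r t : Type*} [Fintype r] [Fintype t] (H : Matrix r t ℂ)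
    (U : Matrix t t ℂ) : (H * U)ᴴ * (H * U) = star U * (Hᴴ * H) * U := by
  simp only [star_eq_conjTranspose, conjTranspose_mul, Matrix.mul_assoc]

lemma IsHermitian.eq_fin_two {K : Matrix (Fin 2) (Fin 2) ℂ} (hK : K.IsHermitian) :
    K = !![((K 0 0).re : ℂ), K 0 1; star (K 0 1), ((K 1 1).re : ℂ)] := by
  have h00 : ((K 0 0).re : ℂ) = K 0 0 := hK.coe_re_apply_self 0
  have h11 : ((K 1 1).re : ℂ) = K 1 1 := hK.coe_re_apply_self 1
  ext i j
  fin_cases i <;> fin_cases j <;> simp [h00, h11, hK.apply 1 0]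

lemma IsHermitian.re_det_fin_two {K : Matrix (Fin 2) (Fin 2) ℂ} (hK : K.IsHermitian) :
    K.det.re = (K 0 0).re * (K 1 1).re - Complex.normSq (K 0 1) := by
  rw [hK.eq_fin_two]
  simp [Complex.normSq_apply]

end Matrix

namespace MIMOSecrecy

/- `det / trace` bounds the smallest eigenvalue of the form `[[d', -w], [-w, d]]`, evaluated here
at `(b, u)`. -/
lemma det_mul_add_sq_le_trace_mul {b d d' u w m : ℝ} (hb : 0 ≤ b) (hd : 0 ≤ d) (hd' : 0 ≤ d')
    (hm : m ≤ u * w) :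
    (d * d' - w ^ 2) * (b ^ 2 + u ^ 2) ≤ (d + d') * (b ^ 2 * d' - 2 * b * m + d * u ^ 2) := by
  have hbm : 0 ≤ (d + d') * (2 * b * (u * w - m)) := by
    have := sub_nonneg.2 hm
    positivity
  nlinarith [sq_nonneg (b * d' - u * w), sq_nonneg (d * u - b * w)]

lemma rankOneGain_mul_splitGain_lt {b b' d d' u w m ρ : ℝ} (hb : 0 ≤ b) (hb' : 0 ≤ b') (hd : 0 ≤ d)
    (hd' : 0 ≤ d') (hu : 0 ≤ u) (hm : m ≤ u * w) (hΔ : 0 < d * d' - w ^ 2)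
    (hρ : 1 + 2 * (d + d') * (1 + (b + b')) / (d * d' - w ^ 2)
      + 2 * (d + d') ^ 3 / (d * d' - w ^ 2) ^ 2 < ρ) :
    (1 + ρ * (b + d)) * ((1 + (ρ - 1) * b) * (1 + b') - (ρ - 1) * u ^ 2)
      < ((1 + (ρ - 1) * (b + d)) * (1 + (b' + d')) - (ρ - 1) * (u ^ 2 + w ^ 2 + 2 * m))
        * (1 + ρ * b) := by
  set Δ := d * d' - w ^ 2
  set t := d + d'
  set c := b * Δ + b ^ 2 * d' - 2 * b * m + d * u ^ 2
  have ht : 0 < t := by nlinarith [sq_nonneg w]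
  have hlin : 2 * t * (1 + (b + b')) < (ρ - 1) * Δ := by
    have : 0 ≤ 2 * t ^ 3 / Δ ^ 2 := by positivity
    rw [← div_lt_iff₀ hΔ]
    linarith
  have hcube : 2 * t ^ 3 < ρ * Δ ^ 2 := by
    have : 0 ≤ 2 * t * (1 + (b + b')) / Δ := by positivity
    rw [← div_lt_iff₀ (by positivity)]
    linarith
  have hρ : 1 < ρ := by nlinarith
  have hc : ρ * (Δ * u ^ 2) ≤ ρ * (t * c) := by
    have hschur := det_mul_add_sq_le_trace_mul hb hd hd' hm
    have hsplit : t * c = t * (b * Δ) + t * (b ^ 2 * d' - 2 * b * m + d * u ^ 2) := by ring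
    have : 0 ≤ t * (b * Δ) + Δ * b ^ 2 := by positivity
    refine mul_le_mul_of_nonneg_left ?_ (by linarith)
    linarith
  have hmid : Δ - 2 * t * u ≤ Δ + 2 * b * d' - 2 * m := by
    have : u * w ≤ u * t := mul_le_mul_of_nonneg_left (by nlinarith) hu
    nlinarith [mul_nonneg hb hd']
  have hquad : 0 ≤ ρ * Δ * u ^ 2 - 2 * t ^ 2 * u + Δ * t / 2 := by
    refine nonneg_of_mul_nonneg_right (a := ρ * Δ) ?_ (by positivity)
    nlinarith [sq_nonneg (ρ * Δ * u - t ^ 2)]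
  have hsum : Δ / 2 ≤ ρ * c + (Δ + 2 * b * d' - 2 * m) := by
    refine le_of_mul_le_mul_left ?_ ht
    nlinarith [mul_le_mul_of_nonneg_left hmid ht.le]
  have hexpand : ((1 + (ρ - 1) * (b + d)) * (1 + (b' + d')) - (ρ - 1) * (u ^ 2 + w ^ 2 + 2 * m))
        * (1 + ρ * b) - (1 + ρ * (b + d)) * ((1 + (ρ - 1) * b) * (1 + b') - (ρ - 1) * u ^ 2)
      = (ρ - 1) * (ρ * c + (Δ + 2 * b * d' - 2 * m)) + (d' * (1 + b) - d * (1 + b')) := by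
    ring
  nlinarith [mul_le_mul_of_nonneg_left hsum (sub_nonneg.2 hρ.le), mul_nonneg hd' hb,
    mul_le_mul (by linarith : d ≤ t) (by linarith : 1 + b' ≤ 1 + (b + b')) (by positivity) ht.le]

lemma log_sub_log_lt_log_sub_log {p q r s : ℝ} (hp : 0 < p) (hq : 0 < q) (hs : 0 < s)
    (h : p * s < r * q) : Real.log p - Real.log q < Real.log r - Real.log s := by
  have hr : 0 < r := pos_of_mul_pos_left ((mul_pos hp hs).trans h) hq.le
  rw [← Real.log_div hp.ne' hq.ne', ← Real.log_div hr.ne' hs.ne']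
  exact Real.log_lt_log (div_pos hp hq) ((div_lt_div_iff₀ hq hs).2 h)

noncomputable def powerSplit (x : ℝ) : Matrix (Fin 2) (Fin 2) ℂ :=
  diagonal ![((1 - x : ℝ) : ℂ), (x : ℂ)]

lemma trace_powerSplit (x : ℝ) : (powerSplit x).trace = 1 := by
  simp [powerSplit]

lemma posSemidef_powerSplit {x : ℝ} (h0 : 0 ≤ x) (h1 : x ≤ 1) : (powerSplit x).PosSemidef := by
  rw [powerSplit, posSemidef_diagonal_iff]
  intro i
  fin_cases i
  · simpa using (by exact_mod_cast h1 : (x : ℂ) ≤ 1)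
  · simpa using (by exact_mod_cast h0 : (0 : ℂ) ≤ x)

lemma re_det_one_add_smul_powerSplit_mul {K : Matrix (Fin 2) (Fin 2) ℂ}
    (hK : K.IsHermitian) (ρ x : ℝ) :
    (1 + (ρ : ℂ) • (powerSplit x * K)).det.re
      = (1 + ρ * (1 - x) * (K 0 0).re) * (1 + ρ * x * (K 1 1).re)
        - ρ ^ 2 * ((1 - x) * x) * Complex.normSq (K 0 1) := by
  rw [hK.eq_fin_two]
  simp [powerSplit, Complex.normSq_apply, det_fin_two, one_fin_two]
  ring

lemma re_det_one_add_smul_powerSplit_zero_mul {K : Matrix (Fin 2) (Fin 2) ℂ}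
    (hK : K.IsHermitian) (ρ : ℝ) :
    (1 + (ρ : ℂ) • (powerSplit 0 * K)).det.re = 1 + ρ * (K 0 0).re := by
  rw [re_det_one_add_smul_powerSplit_mul hK]
  ring

lemma re_det_one_add_smul_powerSplit_inv_mul {K : Matrix (Fin 2) (Fin 2) ℂ}
    (hK : K.IsHermitian) {ρ : ℝ} (hρ : ρ ≠ 0) :
    (1 + (ρ : ℂ) • (powerSplit ρ⁻¹ * K)).det.re
      = (1 + (ρ - 1) * (K 0 0).re) * (1 + (K 1 1).re) - (ρ - 1) * Complex.normSq (K 0 1) := by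
  rw [re_det_one_add_smul_powerSplit_mul hK]
  field_simp

lemma swap_mem_unitaryGroup : !![0, 1; 1, 0] ∈ unitaryGroup (Fin 2) ℂ := by
  rw [mem_unitaryGroup_iff]
  ext i j
  fin_cases i <;> fin_cases j <;> simp [star_eq_conjTranspose, mul_apply, Fin.sum_univ_two]

lemma powerSplit_one : powerSplit 1 = !![0, 1; 1, 0] * powerSplit 0 * star !![0, 1; 1, 0] := by
  ext i j
  fin_cases i <;> fin_cases j <;>
    simp [powerSplit, star_eq_conjTranspose, mul_apply, Fin.sum_univ_two, vecMul_diagonal]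

lemma exists_unitary_eq_conj_powerSplit_zero {Q : Matrix (Fin 2) (Fin 2) ℂ} (hQ : Q.PosSemidef)
    (htr : Q.trace = 1) (hdet : Q.det = 0) :
    ∃ U ∈ unitaryGroup (Fin 2) ℂ, Q = U * powerSplit 0 * star U := by
  set ev := hQ.1.eigenvalues
  set U : Matrix (Fin 2) (Fin 2) ℂ := (hQ.1.eigenvectorUnitary : Matrix (Fin 2) (Fin 2) ℂ)
  have hU : U ∈ unitaryGroup (Fin 2) ℂ := hQ.1.eigenvectorUnitary.2
  have hspec : Q = U * diagonal (RCLike.ofReal ∘ ev) * star U := by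
    simpa using hQ.1.spectral_theorem
  have hsum : ev 0 + ev 1 = 1 := by
    have := congrArg Complex.re hQ.1.trace_eq_sum_eigenvalues
    simpa [htr, Fin.sum_univ_two, eq_comm] using this
  have hprod : ev 0 * ev 1 = 0 := by
    have := congrArg Complex.re hQ.1.det_eq_prod_eigenvalues
    simpa [hdet, Fin.prod_univ_two, eq_comm] using this
  have hdiag : diagonal (RCLike.ofReal ∘ ev) = powerSplit (ev 1) := by
    rw [powerSplit, ← hsum, add_sub_cancel_right]
    ext i j
    fin_cases i <;> fin_cases j <;> rfl
  rcases mul_eq_zero.1 hprod with h0 | h1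
  · refine ⟨U * !![0, 1; 1, 0], mul_mem hU swap_mem_unitaryGroup, ?_⟩
    rw [hspec, hdiag, (by linarith : ev 1 = 1), powerSplit_one, star_mul]
    simp only [Matrix.mul_assoc]
  · exact ⟨U, hU, by rw [hspec, hdiag, h1]⟩

noncomputable def rankTwoThreshold (B D : Matrix (Fin 2) (Fin 2) ℂ) : ℝ :=
  1 + 2 * D.trace.re * (1 + B.trace.re) / D.det.re + 2 * D.trace.re ^ 3 / D.det.re ^ 2

lemma one_le_rankTwoThreshold {B D : Matrix (Fin 2) (Fin 2) ℂ} (hB : B.PosSemidef)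
    (hD : D.PosDef) : 1 ≤ rankTwoThreshold B D := by
  have htB : 0 ≤ B.trace.re := (Complex.le_def.mp hB.trace_nonneg).1
  have htD : 0 ≤ D.trace.re := (Complex.le_def.mp hD.posSemidef.trace_nonneg).1
  have hΔ : 0 < D.det.re := (Complex.lt_def.mp hD.det_pos).1
  unfold rankTwoThreshold
  have : 0 ≤ 2 * D.trace.re * (1 + B.trace.re) / D.det.re := by positivity
  have : 0 ≤ 2 * D.trace.re ^ 3 / D.det.re ^ 2 := by positivity
  linarith

lemma rankTwoThreshold_conj {U : Matrix (Fin 2) (Fin 2) ℂ} (hU : U ∈ unitaryGroup (Fin 2) ℂ)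
    (B D : Matrix (Fin 2) (Fin 2) ℂ) :
    rankTwoThreshold (star U * B * U) (star U * D * U) = rankTwoThreshold B D := by
  have htrace (K : Matrix (Fin 2) (Fin 2) ℂ) : (star U * K * U).trace = K.trace := by
    rw [trace_mul_cycle, Unitary.mul_star_self_of_mem hU, Matrix.one_mul]
  have hdet : (star U * D * U).det = D.det := by
    rw [det_mul, det_mul, mul_comm, ← mul_assoc, ← det_mul, Unitary.mul_star_self_of_mem hU,
      det_one, one_mul]
  simp only [rankTwoThreshold, htrace, hdet]

variable {r e : Type*} [Fintype r] [Fintype e] [DecidableEq r] [DecidableEq e]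

noncomputable def secrecyRate {t : Type*} [Fintype t] (ρ : ℝ) (HR : Matrix r t ℂ)
    (HE : Matrix e t ℂ) (Q : Matrix t t ℂ) : ℝ :=
  Real.log ((1 + (ρ : ℂ) • (HR * Q * HRᴴ)).det.re)
    - Real.log ((1 + (ρ : ℂ) • (HE * Q * HEᴴ)).det.re)

lemma secrecyRate_eq {t : Type*} [Fintype t] [DecidableEq t] (ρ : ℝ) (HR : Matrix r t ℂ)
    (HE : Matrix e t ℂ) (Q : Matrix t t ℂ) :
    secrecyRate ρ HR HE Q = Real.log ((1 + (ρ : ℂ) • (Q * (HRᴴ * HR))).det.re)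
      - Real.log ((1 + (ρ : ℂ) • (Q * (HEᴴ * HE))).det.re) := by
  simp only [secrecyRate, det_one_add_smul_mul_mul_comm]

lemma secrecyRate_conj {t : Type*} [Fintype t] (ρ : ℝ) (HR : Matrix r t ℂ) (HE : Matrix e t ℂ)
    (U S : Matrix t t ℂ) :
    secrecyRate ρ HR HE (U * S * star U) = secrecyRate ρ (HR * U) (HE * U) S := by
  simp only [secrecyRate, star_eq_conjTranspose, conjTranspose_mul, Matrix.mul_assoc]

theorem secrecyRate_powerSplit_zero_lt {HR : Matrix r (Fin 2) ℂ} {HE : Matrix e (Fin 2) ℂ}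
    (hpd : (HRᴴ * HR - HEᴴ * HE).PosDef) {ρ : ℝ}
    (hρ : rankTwoThreshold (HEᴴ * HE) (HRᴴ * HR - HEᴴ * HE) < ρ) :
    secrecyRate ρ HR HE (powerSplit 0) < secrecyRate ρ HR HE (powerSplit ρ⁻¹) := by
  set B := HEᴴ * HE
  set D := HRᴴ * HR - B
  have hB : B.PosSemidef := posSemidef_conjTranspose_mul_self HE
  have hA : HRᴴ * HR = B + D := (add_sub_cancel B _).symm
  have hρ1 : 1 < ρ := (one_le_rankTwoThreshold hB hpd).trans_lt hρ
  have hAh : (B + D).IsHermitian := hB.1.add hpd.1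
  rw [secrecyRate_eq, secrecyRate_eq, hA, re_det_one_add_smul_powerSplit_zero_mul hAh,
    re_det_one_add_smul_powerSplit_zero_mul hB.1,
    re_det_one_add_smul_powerSplit_inv_mul hAh (by positivity),
    re_det_one_add_smul_powerSplit_inv_mul hB.1 (by positivity)]
  simp only [Matrix.add_apply, Complex.add_re, Complex.normSq_add]
  simp only [Complex.normSq_eq_norm_sq]
  have hb : 0 ≤ (B 0 0).re := (Complex.le_def.mp hB.diag_nonneg).1
  have hb' : 0 ≤ (B 1 1).re := (Complex.le_def.mp hB.diag_nonneg).1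
  have hd : 0 ≤ (D 0 0).re := (Complex.le_def.mp hpd.posSemidef.diag_nonneg).1
  have hd' : 0 ≤ (D 1 1).re := (Complex.le_def.mp hpd.posSemidef.diag_nonneg).1
  have hdetB : ‖B 0 1‖ ^ 2 ≤ (B 0 0).re * (B 1 1).re := by
    have := (Complex.le_def.mp hB.det_nonneg).1
    rw [hB.1.re_det_fin_two, Complex.normSq_eq_norm_sq] at this
    simpa using this
  have hdetD : D.det.re = (D 0 0).re * (D 1 1).re - ‖D 0 1‖ ^ 2 := by
    rw [hpd.1.re_det_fin_two, Complex.normSq_eq_norm_sq]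
  have hm : (B 0 1 * (starRingEnd ℂ) (D 0 1)).re ≤ ‖B 0 1‖ * ‖D 0 1‖ := by
    simpa using Complex.re_le_norm (B 0 1 * (starRingEnd ℂ) (D 0 1))
  have hρ' := hρ
  rw [rankTwoThreshold, trace_fin_two, trace_fin_two, Complex.add_re, Complex.add_re, hdetD] at hρ'
  refine log_sub_log_lt_log_sub_log (by positivity) (by positivity) ?_ ?_
  · nlinarith [mul_nonneg (sub_nonneg.2 hρ1.le) hb,
      mul_nonneg (sub_nonneg.2 hρ1.le) (sub_nonneg.2 hdetB)]
  · exact rankOneGain_mul_splitGain_lt hb hb' hd hd' (norm_nonneg _) hm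
      (hdetD ▸ (Complex.lt_def.mp hpd.det_pos).1) hρ'

end MIMOSecrecy

open MIMOSecrecy

/-- For `n_T = 2`, if `H_R†H_R − H_E†H_E` is positive definite,
then there exists `ρ₀ > 0` such that for every `ρ > ρ₀`, every maximizer of the
secrecy rate over `Ω` has rank two. -/
theorem stmt_16 (nR nE : ℕ) (HR : Matrix (Fin nR) (Fin 2) ℂ)
    (HE : Matrix (Fin nE) (Fin 2) ℂ)
    (hpd : (HRᴴ * HR - HEᴴ * HE).PosDef) :
    ∃ ρ₀ : ℝ, 0 < ρ₀ ∧ ∀ ρ : ℝ, ρ₀ < ρ →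
      ∀ Q : Matrix (Fin 2) (Fin 2) ℂ, Q.PosSemidef → Q.trace = 1 →
        (∀ Q' : Matrix (Fin 2) (Fin 2) ℂ, Q'.PosSemidef → Q'.trace = 1 →
          Real.log ((1 + (ρ : ℂ) • (HR * Q' * HRᴴ)).det.re)
              - Real.log ((1 + (ρ : ℂ) • (HE * Q' * HEᴴ)).det.re)
            ≤ Real.log ((1 + (ρ : ℂ) • (HR * Q * HRᴴ)).det.re)
              - Real.log ((1 + (ρ : ℂ) • (HE * Q * HEᴴ)).det.re)) →
        Q.rank = 2 := by
  have hρ₀ := one_le_rankTwoThreshold (posSemidef_conjTranspose_mul_self HE) hpd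
  refine ⟨_, one_pos.trans_le hρ₀, fun ρ hρ Q hQ htr hmax => ?_⟩
  by_contra hrank
  have hdet : Q.det = 0 := by
    by_contra h
    exact hrank ((rank_of_isUnit Q ((isUnit_iff_isUnit_det Q).2 (Ne.isUnit h))).trans
      (Fintype.card_fin 2))
  obtain ⟨U, hU, rfl⟩ := exists_unitary_eq_conj_powerSplit_zero hQ htr hdet
  have hD : (HR * U)ᴴ * (HR * U) - (HE * U)ᴴ * (HE * U) = star U * (HRᴴ * HR - HEᴴ * HE) * U := by
    rw [conjTranspose_mul_self_mul, conjTranspose_mul_self_mul, ← sub_mul, ← mul_sub]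
  have hpdU : ((HR * U)ᴴ * (HR * U) - (HE * U)ᴴ * (HE * U)).PosDef := by
    rw [hD]
    exact (Unitary.isUnit_coe (U := ⟨U, hU⟩)).posDef_star_left_conjugate_iff.2 hpd
  have hρU : rankTwoThreshold ((HE * U)ᴴ * (HE * U))
      ((HR * U)ᴴ * (HR * U) - (HE * U)ᴴ * (HE * U)) < ρ := by
    rwa [hD, conjTranspose_mul_self_mul, rankTwoThreshold_conj hU]
  have hρ1 : 1 ≤ ρ := hρ₀.trans hρ.le
  have hmax' := hmax (U * powerSplit ρ⁻¹ * star U)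
    ((posSemidef_powerSplit (by positivity) (inv_le_one_of_one_le₀ hρ1)).mul_mul_conjTranspose_same
      U)
    (by rw [trace_mul_cycle, Unitary.star_mul_self_of_mem hU, one_mul, trace_powerSplit])
  change secrecyRate ρ HR HE _ ≤ secrecyRate ρ HR HE _ at hmax'
  rw [secrecyRate_conj, secrecyRate_conj] at hmax'
  exact (secrecyRate_powerSplit_zero_lt hpdU hρU).not_ge hmax'
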